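/- arXiv:2512.17753 — 6 statements merged into one kernel-verified Lean document; each statement's English description precedes it below -/
import Mathlib

section
/- Let (a_n) be a positive, non-increasing, convex sequence of reals (i.e., a_n - a_{n+1} ≤ a_{n-1} - a_n for all n ≥ 1), and suppose there is M ≥ 1 with a_n ≤ M·a_{2n} for all n. Then for all n, k ≥ 1, a_{n+k} ≥ (1 - 2Mk/n)·a_n. -/
/-- A positive, non-increasing, convex sequence with `a_n ≤ M·a_{2n}` satisfies
`a_{n+k} ≥ (1 - 2Mk/n)·a_n`. -/
theorem stmt1 (a : ℕ → ℝ) (M : ℝ) (hM : 1 ≤ M)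
    (hpos : ∀ n, 0 < a n)
    (hmono : ∀ n, a (n + 1) ≤ a n)
    (hconv : ∀ n, a (n + 1) - a (n + 2) ≤ a n - a (n + 1))
    (hdouble : ∀ n, a n ≤ M * a (2 * n)) :
    ∀ n k : ℕ, 1 ≤ n → 1 ≤ k → (1 - 2 * M * k / n) * a n ≤ a (n + k) := by
  have mono : ∀ i j : ℕ, i ≤ j → a j ≤ a i := by
    intro i j h
    induction j with
    | zero => simp [Nat.le_zero.mp h]
    | succ j ih =>
      rcases Nat.lt_or_ge i (j+1) with h' | h'
      · exact le_trans (hmono j) (ih (Nat.lt_succ_iff.mp h'))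
      · have : i = j + 1 := le_antisymm h h'
        simp [this]
  have dmono : ∀ i j : ℕ, i ≤ j → a j - a (j+1) ≤ a i - a (i+1) := by
    intro i j h
    induction j with
    | zero => simp [Nat.le_zero.mp h]
    | succ j ih =>
      rcases Nat.lt_or_ge i (j+1) with h' | h'
      · exact le_trans (hconv j) (ih (Nat.lt_succ_iff.mp h'))
      · have : i = j + 1 := le_antisymm h h'
        simp [this]
  have upper : ∀ n k : ℕ, a n - a (n + k) ≤ (k : ℝ) * (a n - a (n+1)) := by
    intro n k
    induction k with
    | zero => simp
    | succ k ih =>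
      have h1 := dmono n (n + k) (Nat.le_add_right _ _)
      have h2 : a n - a (n + (k+1)) =
          (a n - a (n + k)) + (a (n + k) - a (n + k + 1)) := by
        rw [show n + (k+1) = n + k + 1 from rfl]; ring
      push_cast
      rw [h2]; nlinarith
  have lower : ∀ m j : ℕ, ((j:ℝ)+1) * (a (m+j) - a (m+j+1)) ≤ a m - a (m+j+1) := by
    intro m j
    induction j with
    | zero => simp
    | succ j ih =>
      have h1 := hconv (m + j)
      have h2 : m + (j+1) = m + j + 1 := rfl
      have hnn : (0:ℝ) ≤ (j:ℝ) + 1 := by positivity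
      push_cast
      rw [h2]
      nlinarith [mul_le_mul_of_nonneg_left h1 hnn]
  intro n k hn hk
  -- choose m = ⌈n/2⌉ = m' + 1
  obtain ⟨m', hmeq⟩ : ∃ m', (n + 1) / 2 = m' + 1 := ⟨(n+1)/2 - 1, by omega⟩
  have hm2 : 2 * (m' + 1) - 1 ≤ n := by omega
  have hm3 : n ≤ 2 * (m' + 1) := by omega
  -- m * d_{2m-1} ≤ a m - a (2m)
  have key := lower (m'+1) m'
  have heq : m' + 1 + m' + 1 = 2 * (m' + 1) := by ring
  rw [heq] at key
  have heq2 : m' + 1 + m' = 2 * (m' + 1) - 1 := by omega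
  rw [heq2] at key
  -- d_n ≤ d_{2m-1}
  have hd1 : a n - a (n+1) ≤ a (2*(m'+1)-1) - a (2*(m'+1)-1+1) :=
    dmono _ _ (by omega)
  have heq3 : 2*(m'+1)-1+1 = 2*(m'+1) := by omega
  rw [heq3] at hd1
  -- a m - a(2m) ≤ (M-1) * a(2m) ≤ M * a n  (using a(2m) ≤ a n)
  have hdb := hdouble (m'+1)
  have hma : a (2*(m'+1)) ≤ a n := mono _ _ hm3
  have hApos := hpos n
  have h2mpos := hpos (2*(m'+1))
  -- combine: (m'+1) * d_n ≤ M * a n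
  have hkey2 : ((m':ℝ)+1) * (a n - a (n+1)) ≤ M * a n := by
    have h1 : ((m':ℝ)+1) * (a n - a (n+1)) ≤ a (m'+1) - a (2*(m'+1)) := by
      calc ((m':ℝ)+1) * (a n - a (n+1))
          ≤ ((m':ℝ)+1) * (a (2*(m'+1)-1) - a (2*(m'+1))) := by
            apply mul_le_mul_of_nonneg_left hd1; positivity
        _ ≤ a (m'+1) - a (2*(m'+1)) := key
    nlinarith
  -- a n - a (n+k) ≤ k * d_n ≤ k * M * a n / m ≤ 2 M k a n / n
  have hup := upper n k
  have hnpos : (0:ℝ) < n := by exact_mod_cast hn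
  have hkpos : (0:ℝ) < k := by exact_mod_cast hk
  have hmpos : (0:ℝ) < (m':ℝ) + 1 := by positivity
  have hn2m : (n:ℝ) ≤ 2 * ((m':ℝ)+1) := by exact_mod_cast hm3
  have hdn_nonneg : 0 ≤ a n - a (n+1) := by linarith [hmono n]
  -- d_n ≤ M * a n / (m'+1), and k * that ≤ 2Mk a n / n
  have hdn_le : a n - a (n+1) ≤ M * a n / ((m':ℝ)+1) := by
    rw [le_div_iff₀ hmpos]; nlinarith
  have h5 : a n - a (n+k) ≤ (k:ℝ) * (M * a n / ((m':ℝ)+1)) :=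
    le_trans hup (mul_le_mul_of_nonneg_left hdn_le (le_of_lt hkpos))
  have h6 : M * a n / ((m':ℝ)+1) ≤ 2 * M * a n / n := by
    rw [div_le_div_iff₀ hmpos hnpos]
    have hMa : 0 ≤ M * a n := by positivity
    nlinarith
  have h7 : (k:ℝ) * (M * a n / ((m':ℝ)+1)) ≤ (k:ℝ) * (2 * M * a n / n) :=
    mul_le_mul_of_nonneg_left h6 (le_of_lt hkpos)
  have h8 : (1 - 2 * M * (k:ℝ) / n) * a n = a n - (k:ℝ) * (2 * M * a n / n) := by
    field_simp
  rw [h8]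
  linarith
end

section
/- Let (a_n) be a positive, non-increasing, convex sequence with sup_n a_n/a_{2n} < ∞, and let f : ℕ → ℕ satisfy f(n)/n → 0. Then a_{n+f(n)}/a_n → 1 as n → ∞. -/
private lemma diff_anti (a : ℕ → ℝ)
    (hconv : ∀ n, a (n + 1) - a (n + 2) ≤ a n - a (n + 1)) :
    ∀ k l, k ≤ l → a l - a (l + 1) ≤ a k - a (k + 1) := by
  intro k l hkl
  induction hkl with
  | refl => exact le_rfl
  | step h ih => exact le_trans (hconv _) ih

private lemma lemB (a : ℕ → ℝ)
    (hconv : ∀ n, a (n + 1) - a (n + 2) ≤ a n - a (n + 1)) :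
    ∀ m j : ℕ, (j : ℝ) * (a (m + j) - a (m + j + 1)) ≤ a m - a (m + j) := by
  intro m j
  induction j with
  | zero => simp
  | succ j ih =>
    have h1 : a (m + j + 1) - a (m + j + 2) ≤ a (m + j) - a (m + j + 1) :=
      diff_anti a hconv _ _ (Nat.le_succ _)
    have h2 : ((j : ℝ) + 1) * (a (m + (j+1)) - a (m + (j+1) + 1))
        ≤ ((j : ℝ) + 1) * (a (m + j) - a (m + j + 1)) := by
      have : (0:ℝ) ≤ (j:ℝ) + 1 := by positivity
      have e : m + (j+1) = m + j + 1 := by ring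
      rw [e]
      exact mul_le_mul_of_nonneg_left (by linarith [h1]) this
    calc ((j+1 : ℕ) : ℝ) * (a (m + (j+1)) - a (m + (j+1) + 1))
        = ((j:ℝ) + 1) * (a (m + (j+1)) - a (m + (j+1) + 1)) := by push_cast; ring
      _ ≤ ((j:ℝ) + 1) * (a (m + j) - a (m + j + 1)) := h2
      _ = (j:ℝ) * (a (m + j) - a (m + j + 1)) + (a (m + j) - a (m + j + 1)) := by ring
      _ ≤ (a m - a (m + j)) + (a (m + j) - a (m + j + 1)) := by linarith [ih]
      _ = a m - a (m + (j+1)) := by rw [show m + (j+1) = m + j + 1 from by ring]; ring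

private lemma lemC (a : ℕ → ℝ)
    (hconv : ∀ n, a (n + 1) - a (n + 2) ≤ a n - a (n + 1)) :
    ∀ m j : ℕ, a m - a (m + j) ≤ (j : ℝ) * (a m - a (m + 1)) := by
  intro m j
  induction j with
  | zero => simp
  | succ j ih =>
    have h1 : a (m + j) - a (m + j + 1) ≤ a m - a (m + 1) :=
      diff_anti a hconv _ _ (Nat.le_add_right _ _)
    calc a m - a (m + (j+1)) = (a m - a (m + j)) + (a (m + j) - a (m + j + 1)) := by
          rw [show m + (j+1) = m + j + 1 from by ring]; ring
      _ ≤ (j:ℝ) * (a m - a (m + 1)) + (a m - a (m + 1)) := by linarith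
      _ = ((j+1 : ℕ) : ℝ) * (a m - a (m + 1)) := by push_cast; ring

/-- A positive, non-increasing, convex sequence with `sup_n a_n/a_{2n} < ∞` satisfies
`a_{n+f(n)}/a_n → 1` whenever `f(n)/n → 0`. -/
theorem stmt2 (a : ℕ → ℝ)
    (hpos : ∀ n, 0 < a n)
    (hmono : ∀ n, a (n + 1) ≤ a n)
    (hconv : ∀ n, a (n + 1) - a (n + 2) ≤ a n - a (n + 1))
    (hsup : ∃ M : ℝ, ∀ n, a n / a (2 * n) ≤ M)
    (f : ℕ → ℕ)
    (hf : Filter.Tendsto (fun n => (f n : ℝ) / n) Filter.atTop (nhds 0)) :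
    Filter.Tendsto (fun n => a (n + f n) / a n) Filter.atTop (nhds 1) := by
  obtain ⟨M, hM⟩ := hsup
  have amono : Antitone a := antitone_nat_of_succ_le hmono
  have hM1 : (1:ℝ) ≤ M := by
    have := hM 0
    simpa [div_self (hpos 0).ne'] using this
  -- lower bound: tendsto of g n = 1 - 4*M*(f n / n)
  have hg : Filter.Tendsto (fun n => 1 - 4*M*((f n : ℝ)/n)) Filter.atTop (nhds 1) := by
    have := (hf.const_mul (4*M)).const_sub 1
    simpa using this
  refine tendsto_of_tendsto_of_tendsto_of_le_of_le' hg tendsto_const_nhds ?_ ?_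
  · -- 1 - 4M f n / n ≤ a (n + f n) / a n eventually
    filter_upwards [Filter.eventually_ge_atTop 2] with n hn
    set m := (n+1)/2 with hm
    set j := n - m with hj
    have hmj : m + j = n := by omega
    have h2m : n ≤ 2 * m := by omega
    have hjpos : 1 ≤ j := by omega
    have h2j : (n:ℝ) - 1 ≤ 2 * (j:ℝ) := by
      have h : n ≤ 2 * j + 1 := by omega
      have := (Nat.cast_le (α := ℝ)).mpr h
      push_cast at this
      linarith
    -- d n ≤ M * a n / j
    have hB : (j : ℝ) * (a n - a (n + 1)) ≤ a m - a n := by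
      have := lemB a hconv m j
      rwa [hmj] at this
    have ham : a m ≤ M * a n := by
      have h1 : a m ≤ M * a (2*m) := by
        have := hM m
        rw [div_le_iff₀ (hpos (2*m))] at this
        linarith
      have h2 : a (2*m) ≤ a n := amono h2m
      nlinarith [hpos (2*m), hM1]
    have hd : (j:ℝ) * (a n - a (n+1)) ≤ M * a n := by
      have := hpos n
      nlinarith
    -- a n - a (n + f n) ≤ f n * d n
    have hC : a n - a (n + f n) ≤ (f n : ℝ) * (a n - a (n + 1)) := lemC a hconv n (f n)
    have hdnn : 0 ≤ a n - a (n+1) := by linarith [hmono n]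
    have hjR : (0:ℝ) < (j:ℝ) := by exact_mod_cast hjpos
    have hnR : (0:ℝ) < (n:ℝ) := by positivity
    have hfnn : (0:ℝ) ≤ (f n : ℝ) := Nat.cast_nonneg _
    -- a n - a (n + f n) ≤ f n * M * a n / j
    have key : a n - a (n + f n) ≤ (f n : ℝ) * (M * a n) / j := by
      rw [le_div_iff₀ hjR]
      calc (a n - a (n + f n)) * j ≤ ((f n : ℝ) * (a n - a (n+1))) * j := by
            nlinarith
        _ = (f n : ℝ) * ((j:ℝ) * (a n - a (n+1))) := by ring
        _ ≤ (f n : ℝ) * (M * a n) := mul_le_mul_of_nonneg_left hd hfnn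
    -- j ≥ n/4
    have hj4 : (n:ℝ) / 4 ≤ (j:ℝ) := by
      have hn2 : (2:ℝ) ≤ (n:ℝ) := by exact_mod_cast hn
      linarith
    have hpa := hpos n
    have hMa : 0 ≤ M * a n := by nlinarith
    have key2 : a n - a (n + f n) ≤ 4 * M * ((f n : ℝ)/n) * a n := by
      calc a n - a (n + f n) ≤ (f n : ℝ) * (M * a n) / j := key
        _ ≤ (f n : ℝ) * (M * a n) / ((n:ℝ)/4) := by
            apply div_le_div_of_nonneg_left _ (by linarith) hj4
            positivity
        _ = 4 * M * ((f n : ℝ)/n) * a n := by field_simp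
    rw [le_div_iff₀ hpa]
    nlinarith [key2]
  · filter_upwards with n
    have := amono (Nat.le_add_right n (f n))
    exact div_le_one_of_le₀ this (hpos n).le
end

section
/- Let X₁, …, X_n be {0,1}-valued random variables such that for every subset I ⊆ {1,…,n}, P[∀ i ∈ I, X_i = 0] ≤ ∏_{i∈I} P[X_i = 0]. Then for X = Σ X_i and every ε ∈ [0,1], P[X ≤ (1-ε)·E[X]] ≤ exp(-ε²·E[X]/2). -/
/-!
For `t ≤ 0` write `exp (t * X i) = exp t + (1 - exp t) * (1 - X i)`. Expanding the product
over `i`, `E[exp (t * ∑ i, X i)]` becomes a combination with nonnegative coefficients of the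
probabilities `P[∀ i ∈ I, X i = 0]`, so negative correlation bounds it by its value for
independent variables, `∏ i, (1 - (1 - exp t) * p i) ≤ exp (-(1 - exp t) * E[X])` with
`p i = P[X i = 1]`. The Chernoff bound at `t = log (1 - ε)` and `(u ^ 2 - 1) / 2 ≤ u * log u`
on `(0, 1]` give the claim; for `ε = 1` take `t = -log 2`.
-/

open MeasureTheory ProbabilityTheory Finset Real

lemma sq_sub_one_div_two_le_mul_log {u : ℝ} (hu0 : 0 < u) (hu1 : u ≤ 1) :
    (u ^ 2 - 1) / 2 ≤ u * log u := by
  have h := sinh_le_self_iff.2 (log_nonpos hu0.le hu1)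
  rw [sinh_log hu0] at h
  have hu : u * ((u - u⁻¹) / 2) = (u ^ 2 - 1) / 2 := by field_simp
  rw [← hu]
  exact mul_le_mul_of_nonneg_left h hu0.le

section ZeroOne

variable {Ω ι : Type*} {X : ι → Ω → ℝ}

lemma prod_one_sub_eq_indicator (h01 : ∀ i ω, X i ω = 0 ∨ X i ω = 1) (I : Finset ι) (ω : Ω) :
    ∏ i ∈ I, (1 - X i ω) = {ω | ∀ i ∈ I, X i ω = 0}.indicator 1 ω := by
  by_cases h : ∀ i ∈ I, X i ω = 0
  · rw [Set.indicator_of_mem (s := {ω | ∀ i ∈ I, X i ω = 0}) h,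
      prod_eq_one fun i hi => by simp [h i hi]]
    rfl
  · obtain ⟨i, hi, hXi⟩ := not_forall₂.1 h
    rw [Set.indicator_of_notMem (s := {ω | ∀ i ∈ I, X i ω = 0}) h,
      prod_eq_zero hi (by simp [(h01 i ω).resolve_left hXi])]

lemma exp_mul_sum_eq_prod (h01 : ∀ i ω, X i ω = 0 ∨ X i ω = 1) (s : Finset ι) (t : ℝ) (ω : Ω) :
    exp (t * ∑ i ∈ s, X i ω) = ∏ i ∈ s, ((1 - exp t) * (1 - X i ω) + exp t) := by
  rw [mul_sum, exp_sum]
  refine prod_congr rfl fun i _ => ?_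
  rcases h01 i ω with h | h <;> simp [h]

variable [MeasurableSpace Ω] {μ : Measure Ω}

lemma measurableSet_forall_eq_zero (hmeas : ∀ i, Measurable (X i)) (I : Finset ι) :
    MeasurableSet {ω | ∀ i ∈ I, X i ω = 0} := by
  simp only [Set.ofPred_forall]
  exact Finset.measurableSet_biInter I fun i _ => hmeas i (measurableSet_singleton 0)

lemma integrable_prod_one_sub [IsFiniteMeasure μ] (hmeas : ∀ i, Measurable (X i))
    (h01 : ∀ i ω, X i ω = 0 ∨ X i ω = 1) (I : Finset ι) :
    Integrable (fun ω => ∏ i ∈ I, (1 - X i ω)) μ := by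
  simp_rw [prod_one_sub_eq_indicator h01]
  exact (integrable_const 1).indicator (measurableSet_forall_eq_zero hmeas I)

lemma integral_prod_one_sub (hmeas : ∀ i, Measurable (X i))
    (h01 : ∀ i ω, X i ω = 0 ∨ X i ω = 1) (I : Finset ι) :
    ∫ ω, ∏ i ∈ I, (1 - X i ω) ∂μ = μ.real {ω | ∀ i ∈ I, X i ω = 0} := by
  simp_rw [prod_one_sub_eq_indicator h01]
  exact integral_indicator_one (measurableSet_forall_eq_zero hmeas I)

lemma integrable_of_forall_eq_zero_or_eq_one [IsFiniteMeasure μ] {f : Ω → ℝ} (hf : Measurable f)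
    (h01 : ∀ ω, f ω = 0 ∨ f ω = 1) : Integrable f μ :=
  .of_bound hf.aestronglyMeasurable 1 <| ae_of_all _ fun ω => by
    rcases h01 ω with h | h <;> simp [h]

lemma integral_eq_one_sub_measureReal [IsProbabilityMeasure μ] (hmeas : ∀ i, Measurable (X i))
    (h01 : ∀ i ω, X i ω = 0 ∨ X i ω = 1) (i : ι) :
    ∫ ω, X i ω ∂μ = 1 - μ.real {ω | X i ω = 0} := by
  have h := integral_prod_one_sub (μ := μ) hmeas h01 {i}
  simp only [prod_singleton, mem_singleton, forall_eq] at h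
  rw [← h, integral_sub (integrable_const 1)
    (integrable_of_forall_eq_zero_or_eq_one (hmeas i) (h01 i))]
  simp

lemma integral_prod_mul_one_sub_add_le [IsFiniteMeasure μ] (hmeas : ∀ i, Measurable (X i))
    (h01 : ∀ i ω, X i ω = 0 ∨ X i ω = 1)
    (hneg : ∀ I : Finset ι, μ {ω | ∀ i ∈ I, X i ω = 0} ≤ ∏ i ∈ I, μ {ω | X i ω = 0})
    (s : Finset ι) {a b : ℝ} (ha : 0 ≤ a) (hb : 0 ≤ b) :
    ∫ ω, ∏ i ∈ s, (b * (1 - X i ω) + a) ∂μ ≤ ∏ i ∈ s, (b * μ.real {ω | X i ω = 0} + a) := by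
  classical
  have hneg_real (I : Finset ι) :
      μ.real {ω | ∀ i ∈ I, X i ω = 0} ≤ ∏ i ∈ I, μ.real {ω | X i ω = 0} := by
    simpa only [measureReal_def, ENNReal.toReal_prod] using
      ENNReal.toReal_mono (ENNReal.prod_ne_top fun i _ => measure_ne_top μ _) (hneg I)
  simp_rw [prod_add, prod_mul_distrib, prod_const]
  rw [integral_finsetSum _ fun I _ =>
    ((integrable_prod_one_sub hmeas h01 I).const_mul _).mul_const _]
  refine sum_le_sum fun I _ => ?_
  rw [integral_mul_const, integral_const_mul, integral_prod_one_sub hmeas h01]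
  gcongr
  exact hneg_real I

lemma mgf_sum_le [IsProbabilityMeasure μ] (hmeas : ∀ i, Measurable (X i))
    (h01 : ∀ i ω, X i ω = 0 ∨ X i ω = 1)
    (hneg : ∀ I : Finset ι, μ {ω | ∀ i ∈ I, X i ω = 0} ≤ ∏ i ∈ I, μ {ω | X i ω = 0})
    (s : Finset ι) {t : ℝ} (ht : t ≤ 0) :
    mgf (fun ω => ∑ i ∈ s, X i ω) μ t ≤ exp (-((1 - exp t) * ∫ ω, ∑ i ∈ s, X i ω ∂μ)) := by
  have hc : 0 ≤ 1 - exp t := sub_nonneg.2 (exp_le_one_iff.2 ht)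
  calc mgf (fun ω => ∑ i ∈ s, X i ω) μ t
      = ∫ ω, ∏ i ∈ s, ((1 - exp t) * (1 - X i ω) + exp t) ∂μ := by
        simp_rw [mgf, exp_mul_sum_eq_prod h01]
    _ ≤ ∏ i ∈ s, ((1 - exp t) * μ.real {ω | X i ω = 0} + exp t) :=
        integral_prod_mul_one_sub_add_le hmeas h01 hneg s (exp_pos t).le hc
    _ ≤ ∏ i ∈ s, exp (-((1 - exp t) * ∫ ω, X i ω ∂μ)) := by
        refine prod_le_prod (fun i _ => add_nonneg (mul_nonneg hc measureReal_nonneg)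
          (exp_pos t).le) fun i _ => ?_
        rw [integral_eq_one_sub_measureReal hmeas h01]
        linarith [one_sub_le_exp_neg ((1 - exp t) * (1 - μ.real {ω | X i ω = 0}))]
    _ = exp (-((1 - exp t) * ∫ ω, ∑ i ∈ s, X i ω ∂μ)) := by
        rw [← exp_sum, integral_finsetSum _ fun i _ =>
          integrable_of_forall_eq_zero_or_eq_one (hmeas i) (h01 i), mul_sum, sum_neg_distrib]

lemma integrable_exp_mul_sum [IsFiniteMeasure μ] (hmeas : ∀ i, Measurable (X i))
    (h01 : ∀ i ω, X i ω = 0 ∨ X i ω = 1) (s : Finset ι) {t : ℝ} (ht : t ≤ 0) :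
    Integrable (fun ω => exp (t * ∑ i ∈ s, X i ω)) μ := by
  refine .of_bound (by fun_prop) 1 (ae_of_all _ fun ω => ?_)
  have hS : 0 ≤ ∑ i ∈ s, X i ω :=
    sum_nonneg fun i _ => by rcases h01 i ω with h | h <;> simp [h]
  rw [norm_of_nonneg (exp_pos _).le, exp_le_one_iff]
  exact mul_nonpos_of_nonpos_of_nonneg ht hS

lemma measureReal_sum_le_le_exp [IsProbabilityMeasure μ] (hmeas : ∀ i, Measurable (X i))
    (h01 : ∀ i ω, X i ω = 0 ∨ X i ω = 1)
    (hneg : ∀ I : Finset ι, μ {ω | ∀ i ∈ I, X i ω = 0} ≤ ∏ i ∈ I, μ {ω | X i ω = 0})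
    (s : Finset ι) (a : ℝ) {t : ℝ} (ht : t ≤ 0) :
    μ.real {ω | ∑ i ∈ s, X i ω ≤ a}
      ≤ exp (-t * a - (1 - exp t) * ∫ ω, ∑ i ∈ s, X i ω ∂μ) := by
  calc μ.real {ω | ∑ i ∈ s, X i ω ≤ a}
      ≤ exp (-t * a) * mgf (fun ω => ∑ i ∈ s, X i ω) μ t :=
        measure_le_le_exp_mul_mgf a ht (integrable_exp_mul_sum hmeas h01 s ht)
    _ ≤ exp (-t * a) * exp (-((1 - exp t) * ∫ ω, ∑ i ∈ s, X i ω ∂μ)) := by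
        gcongr
        exact mgf_sum_le hmeas h01 hneg s ht
    _ = exp (-t * a - (1 - exp t) * ∫ ω, ∑ i ∈ s, X i ω ∂μ) := by
        rw [← exp_add]
        ring_nf

end ZeroOne

/-- Chernoff lower-tail bound for jointly negatively correlated `{0,1}`-valued random
variables. -/
theorem stmt4 {Ω : Type*} [MeasurableSpace Ω] (μ : Measure Ω) [IsProbabilityMeasure μ]
    (n : ℕ) (X : Fin n → Ω → ℝ)
    (hmeas : ∀ i, Measurable (X i))
    (h01 : ∀ i ω, X i ω = 0 ∨ X i ω = 1)
    (hneg : ∀ I : Finset (Fin n),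
      μ {ω | ∀ i ∈ I, X i ω = 0} ≤ ∏ i ∈ I, μ {ω | X i ω = 0})
    (ε : ℝ) (hε : ε ∈ Set.Icc (0 : ℝ) 1) :
    μ {ω | ∑ i, X i ω ≤ (1 - ε) * ∫ ω', ∑ i, X i ω' ∂μ}
      ≤ ENNReal.ofReal (Real.exp (-(ε ^ 2) * (∫ ω', ∑ i, X i ω' ∂μ) / 2)) := by
  obtain ⟨hε0, hε1⟩ := hε
  have hm : 0 ≤ ∫ ω', ∑ i, X i ω' ∂μ := integral_nonneg fun ω =>
    sum_nonneg fun i _ => by rcases h01 i ω with h | h <;> simp [h]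
  rw [← ofReal_measureReal]
  refine ENNReal.ofReal_le_ofReal ?_
  rcases hε1.lt_or_eq with hε1 | rfl
  · have hu : 0 < 1 - ε := by linarith
    refine (measureReal_sum_le_le_exp hmeas h01 hneg univ _ (log_nonpos hu.le (by linarith))).trans
      (exp_le_exp.2 ?_)
    have hlog := sq_sub_one_div_two_le_mul_log hu (by linarith)
    rw [exp_log hu]
    nlinarith [mul_le_mul_of_nonneg_right hlog hm]
  · refine (measureReal_sum_le_le_exp hmeas h01 hneg univ _ (t := -log 2)
      (neg_nonpos.2 (log_nonneg one_le_two))).trans (exp_le_exp.2 ?_)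
    rw [exp_neg, exp_log two_pos]
    linarith
end

section
/- Fix integers L ≥ 2, k ≥ 1, n ≥ 4k, a string η ∈ Λ^k over the alphabet Λ = [L]² (so |Λ| = L²), and ε ∈ (0, 1/4). For λ ∈ Λ^n let Count(λ, η) be the number of indices i ∈ {0,…,n-k} such that (λ_{i+1},…,λ_{i+k}) = η. Then the number of λ ∈ Λ^n with |Count(λ, η) - (n-k+1)·L^{-2k}| ≥ ε·(n-k+1)·L^{-2k} is at most C(k)·exp(-c(k,ε)·n)·|Λ|^n for constants C(k) > 0 and c(k,ε) > 0 depending only on k, L, ε. -/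
/-!
Split the window starts `i ∈ {0, …, n-k}` into the `k` residue classes mod `k`. Within one class
the windows are pairwise disjoint, so under the uniform measure on strings the class count is a
sum of independent Bernoulli variables of mean `B⁻¹ = |Λ|^{-k}`; concretely its exponential moment
factorizes, `∑_x e^{t X(x)} = |Λ|^{n-mk} (e^t - 1 + B)^m`. Since `e^t - 1 ≤ t + t²` for `|t| ≤ 1`,
Markov's inequality at `t = ±ε/2` bounds each tail of the class count by `e^{-ε² m/(4B)} |Λ|^n`.
A deviation of the total count forces a deviation in one class, and every class has
`m ≥ n/(2k)` windows once `n ≥ 4k`.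
-/

open Finset

lemma Fintype.sum_comp_embedding {ι β Λ R : Type*} [Fintype ι] [DecidableEq ι] [Fintype β]
    [DecidableEq β] [Fintype Λ] [CommSemiring R] (ψ : β ↪ ι) (G : (β → Λ) → R) :
    ∑ x : ι → Λ, G (x ∘ ψ) = Fintype.card Λ ^ (Fintype.card ι - Fintype.card β) * ∑ μ, G μ := by
  classical
  let p : ι → Prop := (· ∈ Set.range ψ)
  let e : β ≃ {i // p i} := Equiv.ofInjective ψ ψ.injective
  have hcompl : Fintype.card {i // ¬p i} = Fintype.card ι - Fintype.card β := by
    rw [Fintype.card_subtype_compl, ← Fintype.card_congr e]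
  calc ∑ x : ι → Λ, G (x ∘ ψ)
      = ∑ uv : ({i // p i} → Λ) × ({i // ¬p i} → Λ), G (uv.1 ∘ e) :=
        (Equiv.piEquivPiSubtypeProd p fun _ => Λ).sum_comp fun uv => G (uv.1 ∘ e)
    _ = Fintype.card Λ ^ (Fintype.card ι - Fintype.card β) * ∑ u : {i // p i} → Λ, G (u ∘ e) := by
        simp only [Fintype.sum_prod_type_right, sum_const, card_univ, Fintype.card_fun, hcompl,
          nsmul_eq_mul, Nat.cast_pow]
    _ = Fintype.card Λ ^ (Fintype.card ι - Fintype.card β) * ∑ μ, G μ := by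
        rw [← (e.arrowCongr (Equiv.refl Λ)).symm.sum_comp]
        rfl

lemma card_filter_le_exp_neg_mul_sum_exp {Ω : Type*} [Fintype Ω] (g : Ω → ℝ) (a : ℝ) :
    (#{ω | a ≤ g ω} : ℝ) ≤ Real.exp (-a) * ∑ ω, Real.exp (g ω) := by
  calc (#{ω | a ≤ g ω} : ℝ) = ∑ ω ∈ {ω | a ≤ g ω}, 1 := by simp
    _ ≤ ∑ ω ∈ {ω | a ≤ g ω}, Real.exp (-a) * Real.exp (g ω) := by
        refine sum_le_sum fun ω hω => ?_
        rw [← Real.exp_add]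
        exact Real.one_le_exp (by linarith [(mem_filter.1 hω).2])
    _ ≤ ∑ ω, Real.exp (-a) * Real.exp (g ω) :=
        sum_le_sum_of_subset_of_nonneg (subset_univ _) fun _ _ _ => by positivity
    _ = Real.exp (-a) * ∑ ω, Real.exp (g ω) := (mul_sum _ _ _).symm

lemma exp_sub_one_add_le {B t : ℝ} (hB : 1 ≤ B) (ht : |t| ≤ 1) :
    Real.exp t - 1 + B ≤ B * Real.exp ((t + t ^ 2) / B) := by
  have hexp : Real.exp t - 1 ≤ t + t ^ 2 := by
    linarith [le_abs_self (Real.exp t - 1 - t), Real.abs_exp_sub_one_sub_id_le ht]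
  calc Real.exp t - 1 + B ≤ B * (1 + (t + t ^ 2) / B) := by
        rw [mul_add, mul_div_cancel₀ _ (by positivity)]; linarith
    _ ≤ B * Real.exp ((t + t ^ 2) / B) := by
        gcongr
        linarith [Real.add_one_le_exp ((t + t ^ 2) / B)]

section Blocks

variable {ι α κ Λ : Type*} [Fintype ι] [DecidableEq ι] [Fintype α] [Fintype κ] [DecidableEq κ]
  [Fintype Λ] [DecidableEq Λ]

def blockCount (ψ : α × κ ↪ ι) (η : κ → Λ) (x : ι → Λ) : ℕ :=
  #{j | (fun l => x (ψ (j, l))) = η}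

lemma sum_ite_eq_else_one (η : κ → Λ) (a : ℝ) :
    ∑ s : κ → Λ, (if s = η then a else 1) = a - 1 + Fintype.card Λ ^ Fintype.card κ := by
  have h : ∀ s : κ → Λ, (if s = η then a else 1) = (if s = η then a - 1 else 0) + 1 := by
    intro s; split_ifs <;> ring
  simp only [h, sum_add_distrib, Fintype.sum_ite_eq', sum_const, card_univ, Fintype.card_fun,
    nsmul_eq_mul, mul_one, Nat.cast_pow]

lemma sum_exp_mul_blockCount (ψ : α × κ ↪ ι) (η : κ → Λ) (t : ℝ) :
    ∑ x : ι → Λ, Real.exp (t * blockCount ψ η x)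
      = Fintype.card Λ ^ (Fintype.card ι - Fintype.card α * Fintype.card κ)
        * (Real.exp t - 1 + Fintype.card Λ ^ Fintype.card κ) ^ Fintype.card α := by
  classical
  set F : (κ → Λ) → ℝ := fun s => if s = η then Real.exp t else 1
  have hprod : ∀ x : ι → Λ,
      Real.exp (t * blockCount ψ η x) = ∏ j, F fun l => (x ∘ ψ) (j, l) := by
    intro x
    rw [mul_comm, Real.exp_nat_mul, blockCount, prod_ite, prod_const, prod_const_one, mul_one]
    rfl
  calc ∑ x : ι → Λ, Real.exp (t * blockCount ψ η x)
      = Fintype.card Λ ^ (Fintype.card ι - Fintype.card α * Fintype.card κ)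
          * ∑ μ : α × κ → Λ, ∏ j, F fun l => μ (j, l) := by
        simp only [hprod]
        rw [← Fintype.card_prod]
        exact Fintype.sum_comp_embedding ψ fun μ => ∏ j, F fun l => μ (j, l)
    _ = Fintype.card Λ ^ (Fintype.card ι - Fintype.card α * Fintype.card κ)
          * (∑ s, F s) ^ Fintype.card α := by
        rw [← (Equiv.curry α κ Λ).symm.sum_comp]
        change _ * ∑ ν : α → κ → Λ, ∏ j, F (ν j) = _
        rw [← Fintype.prod_sum, prod_const, card_univ]
    _ = _ := by rw [sum_ite_eq_else_one]

variable [Nonempty Λ]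

lemma card_filter_le_mul_blockCount_le (ψ : α × κ ↪ ι) (η : κ → Λ) {t : ℝ} (ht : |t| ≤ 1)
    (a : ℝ) :
    (#{x | a ≤ t * blockCount ψ η x} : ℝ) ≤ Fintype.card Λ ^ Fintype.card ι
      * Real.exp (Fintype.card α * (t + t ^ 2) / Fintype.card Λ ^ Fintype.card κ - a) := by
  set A : ℝ := (Fintype.card Λ : ℝ)
  set B : ℝ := A ^ Fintype.card κ
  have hA : 1 ≤ A := Nat.one_le_cast.2 Fintype.card_pos
  have hB : 1 ≤ B := one_le_pow₀ hA
  have hdim : Fintype.card α * Fintype.card κ ≤ Fintype.card ι := by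
    simpa using Fintype.card_le_of_embedding ψ
  calc (#{x | a ≤ t * blockCount ψ η x} : ℝ)
      ≤ Real.exp (-a) * ∑ x : ι → Λ, Real.exp (t * blockCount ψ η x) :=
        card_filter_le_exp_neg_mul_sum_exp _ a
    _ = Real.exp (-a) * (A ^ (Fintype.card ι - Fintype.card α * Fintype.card κ)
          * (Real.exp t - 1 + B) ^ Fintype.card α) := by
        rw [sum_exp_mul_blockCount]
    _ ≤ Real.exp (-a) * (A ^ (Fintype.card ι - Fintype.card α * Fintype.card κ)
          * (B * Real.exp ((t + t ^ 2) / B)) ^ Fintype.card α) := by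
        have : 0 ≤ Real.exp t - 1 + B := by linarith [Real.exp_pos t]
        gcongr
        exact exp_sub_one_add_le hB ht
    _ = A ^ Fintype.card ι * Real.exp (Fintype.card α * (t + t ^ 2) / B - a) := by
        rw [mul_pow, ← Real.exp_nat_mul, ← pow_mul, mul_comm (Fintype.card κ),
          ← pow_sub_mul_pow A hdim, Real.exp_sub, Real.exp_neg, mul_div_assoc]
        field_simp

lemma card_blockCount_deviation_le (ψ : α × κ ↪ ι) (η : κ → Λ) {ε : ℝ} (hε0 : 0 ≤ ε)
    (hε2 : ε ≤ 2) :
    (#{x | ε * ((Fintype.card α : ℝ) / Fintype.card Λ ^ Fintype.card κ)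
        ≤ |blockCount ψ η x - (Fintype.card α : ℝ) / Fintype.card Λ ^ Fintype.card κ|} : ℝ)
      ≤ 2 * Fintype.card Λ ^ Fintype.card ι
        * Real.exp (-(ε ^ 2 / 4) * ((Fintype.card α : ℝ) / Fintype.card Λ ^ Fintype.card κ)) := by
  set μ : ℝ := (Fintype.card α : ℝ) / Fintype.card Λ ^ Fintype.card κ with hμ
  have ht : |ε / 2| ≤ 1 := abs_le.2 ⟨by linarith, by linarith⟩
  have ht' : |-(ε / 2)| ≤ 1 := by rwa [abs_neg]
  have hsplit : ({x | ε * μ ≤ |blockCount ψ η x - μ|} : Finset (ι → Λ))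
      ⊆ ({x | ε / 2 * ((1 + ε) * μ) ≤ ε / 2 * blockCount ψ η x} : Finset _)
        ∪ ({x | -(ε / 2) * ((1 - ε) * μ) ≤ -(ε / 2) * blockCount ψ η x} : Finset _) := by
    intro x hx
    simp only [mem_filter, mem_univ, true_and, mem_union] at hx ⊢
    rcases le_abs'.1 hx with hlow | hup
    · exact Or.inr (mul_le_mul_of_nonpos_left (by linarith) (by linarith))
    · exact Or.inl (mul_le_mul_of_nonneg_left (by linarith) (by linarith))
  calc (#{x | ε * μ ≤ |blockCount ψ η x - μ|} : ℝ)
      ≤ #{x | ε / 2 * ((1 + ε) * μ) ≤ ε / 2 * blockCount ψ η x}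
        + #{x | -(ε / 2) * ((1 - ε) * μ) ≤ -(ε / 2) * blockCount ψ η x} := by
        exact_mod_cast (card_le_card hsplit).trans (card_union_le _ _)
    _ ≤ Fintype.card Λ ^ Fintype.card ι * Real.exp (-(ε ^ 2 / 4) * μ)
        + Fintype.card Λ ^ Fintype.card ι * Real.exp (-(ε ^ 2 / 4) * μ) := by
        gcongr
        · refine (card_filter_le_mul_blockCount_le ψ η ht _).trans_eq ?_
          rw [hμ]; ring_nf
        · refine (card_filter_le_mul_blockCount_le ψ η ht' _).trans_eq ?_
          rw [hμ]; ring_nf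
    _ = 2 * Fintype.card Λ ^ Fintype.card ι * Real.exp (-(ε ^ 2 / 4) * μ) := by ring

end Blocks

def windowBlocks (n k r : ℕ) : Fin ((n - r) / k) × Fin k ↪ Fin n where
  toFun p := ⟨r + finProdFinEquiv p, by
    have := (finProdFinEquiv p).isLt
    have := Nat.div_mul_le_self (n - r) k
    omega⟩
  inj' p q h := finProdFinEquiv.injective <| Fin.ext <| by simpa using congrArg Fin.val h

lemma windowBlocks_apply_val (n k r : ℕ) (p : Fin ((n - r) / k) × Fin k) :
    (windowBlocks n k r p : ℕ) = r + k * p.1 + p.2 := by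
  simp only [windowBlocks, Function.Embedding.coeFn_mk, finProdFinEquiv_apply_val]
  ring

lemma card_filter_range_eq_sum_residues {n k : ℕ} (hk : 0 < k) (hkn : k ≤ n) (P : ℕ → Prop)
    [DecidablePred P] :
    #{i ∈ range (n - k + 1) | P i} = ∑ r ∈ range k, #{j : Fin ((n - r) / k) | P (r + k * j)} := by
  rw [card_eq_sum_card_fiberwise (f := (· % k)) (t := range k)
    fun i _ => mem_range.2 (Nat.mod_lt i hk)]
  refine sum_congr rfl fun r hr =>
    (card_bij (fun (j : Fin ((n - r) / k)) _ => r + k * (j : ℕ)) ?_ ?_ ?_).symm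
  · intro j hPj
    have hr : r < k := mem_range.1 hr
    have hj : (j + 1 : ℕ) * k ≤ n - r := (Nat.le_div_iff_mul_le hk).1 j.isLt
    rw [add_mul, one_mul, mul_comm] at hj
    simp only [mem_filter, mem_univ, true_and] at hPj ⊢
    refine ⟨⟨mem_range.2 (by omega), hPj⟩, ?_⟩
    rw [Nat.add_mul_mod_self_left, Nat.mod_eq_of_lt hr]
  · intro a _ b _ hab
    exact Fin.ext (Nat.eq_of_mul_eq_mul_left hk (by omega))
  · intro i hi
    simp only [mem_filter, mem_range] at hi
    obtain ⟨⟨hin, hPi⟩, rfl⟩ := hi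
    have hdiv := Nat.mod_add_div i k
    have hlt : i / k < (n - i % k) / k := by
      rw [← Nat.add_one_le_iff, Nat.le_div_iff_mul_le hk, add_mul, one_mul, mul_comm]
      omega
    exact ⟨⟨i / k, hlt⟩, by simpa [hdiv] using hPi, hdiv⟩

def substringCount {Λ : Type*} [DecidableEq Λ] {n k : ℕ} (x : Fin n → Λ) (η : Fin k → Λ) : ℕ :=
  #{i ∈ range (n - k + 1) | ∀ j : Fin k, ∀ h : i + j.val < n, x ⟨i + j.val, h⟩ = η j}

lemma substringCount_eq_sum_blockCount {Λ : Type*} [DecidableEq Λ] {n k : ℕ} (hk : 0 < k)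
    (hkn : k ≤ n) (x : Fin n → Λ) (η : Fin k → Λ) :
    substringCount x η = ∑ r ∈ range k, blockCount (windowBlocks n k r) η x := by
  rw [substringCount, card_filter_range_eq_sum_residues hk hkn]
  refine sum_congr rfl fun r _ => congrArg card (filter_congr fun j _ => ?_)
  rw [funext_iff]
  refine forall_congr' fun l => ?_
  have hval := windowBlocks_apply_val n k r (j, l)
  have hlt : r + k * j + l < n := hval ▸ (windowBlocks n k r (j, l)).isLt
  rw [show windowBlocks n k r (j, l) = ⟨r + k * j + l, hlt⟩ from Fin.ext hval]
  exact forall_prop_of_true hlt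

lemma sub_add_one_eq_sum_div {n k : ℕ} (hk : 0 < k) (hkn : k ≤ n) :
    n - k + 1 = ∑ r ∈ range k, (n - r) / k := by
  simpa using card_filter_range_eq_sum_residues hk hkn fun _ => True

lemma le_two_mul_mul_div {n k r : ℕ} (hr : r < k) (hkn : 4 * k ≤ n) :
    n ≤ 2 * (k * ((n - r) / k)) := by
  have := Nat.div_add_mod (n - r) k
  have := Nat.mod_lt (n - r) (by omega : 0 < k)
  omega

lemma Finset.exists_mul_le_abs_sub_of_mul_sum_le_abs_sub {β : Type*} {s : Finset β}
    (hs : s.Nonempty) (x y : β → ℝ) {ε : ℝ}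
    (h : ε * ∑ i ∈ s, y i ≤ |∑ i ∈ s, x i - ∑ i ∈ s, y i|) :
    ∃ i ∈ s, ε * y i ≤ |x i - y i| := by
  by_contra! hlt
  have : |∑ i ∈ s, x i - ∑ i ∈ s, y i| < ε * ∑ i ∈ s, y i := calc
    |∑ i ∈ s, x i - ∑ i ∈ s, y i| = |∑ i ∈ s, (x i - y i)| := by rw [sum_sub_distrib]
    _ ≤ ∑ i ∈ s, |x i - y i| := abs_sum_le_sum_abs _ _
    _ < ∑ i ∈ s, ε * y i := sum_lt_sum_of_nonempty hs hlt
    _ = ε * ∑ i ∈ s, y i := (mul_sum _ _ _).symm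
  linarith

theorem card_substringCount_deviation_le {Λ : Type*} [Fintype Λ] [DecidableEq Λ] [Nonempty Λ]
    {n k : ℕ} (hk : 0 < k) (hkn : 4 * k ≤ n) (η : Fin k → Λ) {ε : ℝ} (hε0 : 0 ≤ ε)
    (hε2 : ε ≤ 2) :
    (#{x : Fin n → Λ | ε * ((n - k + 1 : ℕ) / (Fintype.card Λ : ℝ) ^ k)
        ≤ |substringCount x η - (n - k + 1 : ℕ) / (Fintype.card Λ : ℝ) ^ k|} : ℝ)
      ≤ 2 * k * Real.exp (-(ε ^ 2 / (8 * k * (Fintype.card Λ : ℝ) ^ k)) * n)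
        * Fintype.card Λ ^ n := by
  set B : ℝ := (Fintype.card Λ : ℝ) ^ k
  set bad : ℕ → Finset (Fin n → Λ) := fun r =>
    {x | ε * (((n - r) / k : ℕ) / B)
      ≤ |blockCount (windowBlocks n k r) η x - ((n - r) / k : ℕ) / B|}
  have hsub : ({x | ε * ((n - k + 1 : ℕ) / B) ≤ |substringCount x η - (n - k + 1 : ℕ) / B|} :
      Finset (Fin n → Λ)) ⊆ (range k).biUnion bad := by
    intro x hx
    simp only [mem_filter, mem_univ, true_and, mem_biUnion, bad] at hx ⊢
    rw [substringCount_eq_sum_blockCount hk (by omega), sub_add_one_eq_sum_div hk (by omega),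
      Nat.cast_sum, Nat.cast_sum, sum_div] at hx
    exact exists_mul_le_abs_sub_of_mul_sum_le_abs_sub (nonempty_range_iff.2 hk.ne') _ _ hx
  have hbad : ∀ r ∈ range k, (#(bad r) : ℝ)
      ≤ 2 * Fintype.card Λ ^ n * Real.exp (-(ε ^ 2 / (8 * k * B)) * n) := by
    intro r hr
    have hnm : (n : ℝ) ≤ 2 * (k * ((n - r) / k : ℕ)) := by
      exact_mod_cast le_two_mul_mul_div (mem_range.1 hr) hkn
    have hB : 0 < B := by positivity
    have h := card_blockCount_deviation_le (windowBlocks n k r) η hε0 hε2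
    simp only [Fintype.card_fin] at h
    refine h.trans (mul_le_mul_of_nonneg_left (Real.exp_le_exp.2 ?_) (by positivity))
    rw [neg_mul, neg_mul, neg_le_neg_iff]
    calc ε ^ 2 / (8 * k * B) * n ≤ ε ^ 2 / (8 * k * B) * (2 * (k * ((n - r) / k : ℕ))) := by
          gcongr
      _ = ε ^ 2 / 4 * (((n - r) / k : ℕ) / B) := by
          field_simp
          ring
  calc (#{x : Fin n → Λ | ε * ((n - k + 1 : ℕ) / B)
        ≤ |substringCount x η - (n - k + 1 : ℕ) / B|} : ℝ)
      ≤ ∑ r ∈ range k, (#(bad r) : ℝ) := by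
        exact_mod_cast (card_le_card hsub).trans card_biUnion_le
    _ ≤ ∑ r ∈ range k, 2 * Fintype.card Λ ^ n * Real.exp (-(ε ^ 2 / (8 * k * B)) * n) :=
        sum_le_sum hbad
    _ = 2 * k * Real.exp (-(ε ^ 2 / (8 * k * B)) * n) * Fintype.card Λ ^ n := by
        rw [sum_const, card_range, nsmul_eq_mul]
        ring

/-- Large-deviation bound for the number of occurrences of a fixed substring `η ∈ Λ^k`
(with `Λ = [L]²`) in strings `λ ∈ Λ^n`: the number of strings whose substring count
deviates from its mean `(n-k+1)/L^{2k}` by a factor `ε` is exponentially small compared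
to `|Λ|^n = L^{2n}`. -/
theorem stmt6 (L : ℕ) (hL : 2 ≤ L) (k : ℕ) (hk : 1 ≤ k) (ε : ℝ)
    (hε : ε ∈ Set.Ioo (0 : ℝ) (1 / 4)) :
    ∃ C > (0 : ℝ), ∃ c > (0 : ℝ), ∀ n : ℕ, 4 * k ≤ n → ∀ η : Fin k → Fin L × Fin L,
      (Nat.card {lam : Fin n → Fin L × Fin L |
          |(((Finset.range (n - k + 1)).filter (fun i =>
              ∀ j : Fin k, ∀ h : i + j.val < n, lam ⟨i + j.val, h⟩ = η j)).card : ℝ)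
            - ((n - k + 1 : ℕ) : ℝ) / (L : ℝ) ^ (2 * k)|
          ≥ ε * (((n - k + 1 : ℕ) : ℝ) / (L : ℝ) ^ (2 * k))} : ℝ)
        ≤ C * Real.exp (-c * n) * (L : ℝ) ^ (2 * n) := by
  obtain ⟨hε0, hε1⟩ := hε
  have : Nonempty (Fin L × Fin L) := ⟨(⟨0, by omega⟩, ⟨0, by omega⟩)⟩
  refine ⟨2 * k, by positivity, ε ^ 2 / (8 * k * (L : ℝ) ^ (2 * k)), by positivity,
    fun n hn η => ?_⟩
  have hcard : (Fintype.card (Fin L × Fin L) : ℝ) = (L : ℝ) ^ 2 := by simp [sq]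
  have h := card_substringCount_deviation_le hk hn η hε0.le (by linarith)
  rw [hcard, ← pow_mul, ← pow_mul] at h
  rw [Nat.card_eq_fintype_card, Fintype.card_subtype]
  exact h
end

section
/- Fix L ≥ 2, θ ∈ [0,π], k ≥ 1, and a square Q(κ) of the grid D_1. For a grid square Q(η) ∈ D_k, define V(θ,η,κ) = L^{2k} ∫_ℝ |ℓ(θ,s) ∩ Q(η)|·|ℓ(θ,s) ∩ Q(κ)| ds and Err(θ,η,κ) = sup over t with ℓ(θ,t) ∩ Q(η) ≠ ∅ of | |ℓ(θ,t) ∩ Q(κ)| - V(θ,η,κ) |. Then the average over all η ∈ D_k of Err(θ,η,κ) is at most C·L^{-k}, with C depending only on L. -/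
open MeasureTheory

/-- Orthogonal projection in direction `θ`: `ℓ(θ,t) = proj θ ⁻¹ {t}` is the line in direction
`(cos θ, sin θ)` through `t·(-sin θ, cos θ)`. -/
noncomputable def proj (θ : ℝ) (p : ℝ × ℝ) : ℝ := -p.1 * Real.sin θ + p.2 * Real.cos θ

/-- The line `ℓ(θ,t) = proj_θ⁻¹(t)`. -/
def lineSet (θ t : ℝ) : Set (ℝ × ℝ) := {p | proj θ p = t}

/-- Length (1-dimensional Lebesgue measure) of `ℓ(θ,t) ∩ K`, computed via the unit-speed
parametrization `u ↦ t·(-sin θ, cos θ) + u·(cos θ, sin θ)` of the line `ℓ(θ,t)`. -/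
noncomputable def lineLen (θ t : ℝ) (K : Set (ℝ × ℝ)) : ENNReal :=
  volume {u : ℝ |
    (t * (-Real.sin θ) + u * Real.cos θ, t * Real.cos θ + u * Real.sin θ) ∈ K}

/-- The closed grid square of `D_k` (the `L^k × L^k` grid of `[0,1]²`) with lower-left corner
`(a/L^k, b/L^k)`. -/
def gridSq (L k a b : ℕ) : Set (ℝ × ℝ) :=
  Set.Icc ((a : ℝ) / (L : ℝ) ^ k) (((a : ℝ) + 1) / (L : ℝ) ^ k) ×ˢ
    Set.Icc ((b : ℝ) / (L : ℝ) ^ k) (((b : ℝ) + 1) / (L : ℝ) ^ k)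

/-- `V(θ,η,κ) = L^{2k} ∫ |ℓ(θ,s) ∩ Q(η)|·|ℓ(θ,s) ∩ Q(κ)| ds`, where `Q(η)` is the square of
`D_k` with lower-left corner `(aη/L^k, bη/L^k)` and `Q(κ) ∈ D_1`. -/
noncomputable def Vval (L k : ℕ) (θ : ℝ) (aη bη aκ bκ : ℕ) : ℝ :=
  (L : ℝ) ^ (2 * k) * ∫ s : ℝ,
    (lineLen θ s (gridSq L k aη bη)).toReal * (lineLen θ s (gridSq L 1 aκ bκ)).toReal

/-- `Err(θ,η,κ) = sup_{t : ℓ(θ,t) ∩ Q(η) ≠ ∅} | |ℓ(θ,t) ∩ Q(κ)| - V(θ,η,κ) |`. -/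
noncomputable def ErrVal (L k : ℕ) (θ : ℝ) (aη bη aκ bκ : ℕ) : ℝ :=
  sSup {x : ℝ | ∃ t : ℝ, (lineSet θ t ∩ gridSq L k aη bη).Nonempty ∧
    x = |(lineLen θ t (gridSq L 1 aκ bκ)).toReal - Vval L k θ aη bη aκ bκ|}

/-!
For a compact convex set `K`, the section length `f t = |ℓ(θ,t) ∩ K|` is quasiconcave in `t`
(Brunn–Minkowski in dimension one). For such `f` the oscillation on an interval `[α, β]` is at most
`φ β - φ α`, where `φ t = sup_{s ≤ t} f s - sup_{s ≥ t} f s` is monotone and bounded. Since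
`V(θ,η,κ)` averages `f` over the projection interval `[α_η, β_η]` of `Q(η)`, we get
`Err(θ,η,κ) ≤ φ β_η - φ α_η`. Along a row (or a column) of `D_k` roughly transversal to `θ`, the
intervals `[α_η, β_η]` of every second square are disjoint and ordered, so these increments sum to
`O(1)` per row, and to `O(L^k)` over the `L^k` rows.
-/

open Set

noncomputable section

section Envelope

variable {f : ℝ → ℝ}

def supIic (f : ℝ → ℝ) (t : ℝ) : ℝ := sSup (f '' Iic t)

def supIci (f : ℝ → ℝ) (t : ℝ) : ℝ := sSup (f '' Ici t)

def envelopeDiff (f : ℝ → ℝ) (t : ℝ) : ℝ := supIic f t - supIci f t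

lemma le_supIic (hf : BddAbove (range f)) {s t : ℝ} (h : s ≤ t) : f s ≤ supIic f t :=
  le_csSup (hf.mono (image_subset_range _ _)) ⟨s, h, rfl⟩

lemma le_supIci (hf : BddAbove (range f)) {s t : ℝ} (h : t ≤ s) : f s ≤ supIci f t :=
  le_csSup (hf.mono (image_subset_range _ _)) ⟨s, h, rfl⟩

lemma supIic_mono (hf : BddAbove (range f)) : Monotone (supIic f) := fun _ _ h =>
  csSup_le_csSup (hf.mono (image_subset_range _ _)) (nonempty_Iic.image f)
    (image_mono (Iic_subset_Iic.2 h))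

lemma supIci_anti (hf : BddAbove (range f)) : Antitone (supIci f) := fun _ _ h =>
  csSup_le_csSup (hf.mono (image_subset_range _ _)) (nonempty_Ici.image f)
    (image_mono (Ici_subset_Ici.2 h))

lemma envelopeDiff_mono (hf : BddAbove (range f)) : Monotone (envelopeDiff f) := fun _ _ h =>
  sub_le_sub (supIic_mono hf h) (supIci_anti hf h)

lemma envelopeDiff_mem_Icc {M : ℝ} (hf : ∀ t, f t ∈ Icc 0 M) (t : ℝ) :
    envelopeDiff f t ∈ Icc (-M) M := by
  have hb : BddAbove (range f) := ⟨M, by rintro _ ⟨s, rfl⟩; exact (hf s).2⟩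
  have hle : ∀ s : Set ℝ, s.Nonempty → sSup (f '' s) ≤ M := fun s hs =>
    csSup_le (hs.image f) (by rintro _ ⟨u, -, rfl⟩; exact (hf u).2)
  have h₁ : 0 ≤ supIic f t := (hf t).1.trans (le_supIic hb le_rfl)
  have h₂ : 0 ≤ supIci f t := (hf t).1.trans (le_supIci hb le_rfl)
  have h₃ : supIic f t ≤ M := hle _ nonempty_Iic
  have h₄ : supIci f t ≤ M := hle _ nonempty_Ici
  unfold envelopeDiff
  constructor <;> linarith

lemma min_supIic_supIci_le (hq : QuasiconcaveOn ℝ univ f) {α β t : ℝ} (hα : α ≤ t)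
    (hβ : t ≤ β) : min (supIic f α) (supIci f β) ≤ f t := by
  by_contra! h
  obtain ⟨_, ⟨t₁, ht₁, rfl⟩, h₁⟩ :=
    exists_lt_of_lt_csSup (nonempty_Iic.image f) (lt_min_iff.1 h).1
  obtain ⟨_, ⟨t₂, ht₂, rfl⟩, h₂⟩ :=
    exists_lt_of_lt_csSup (nonempty_Ici.image f) (lt_min_iff.1 h).2
  have := (hq (min (f t₁) (f t₂))).ordConnected.out ⟨trivial, min_le_left _ _⟩
    ⟨trivial, min_le_right _ _⟩ ⟨(mem_Iic.1 ht₁).trans hα, hβ.trans (mem_Ici.1 ht₂)⟩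
  exact (lt_min h₁ h₂).not_ge this.2

lemma sub_le_envelopeDiff_sub (hq : QuasiconcaveOn ℝ univ f) (hf : BddAbove (range f))
    {α β s t : ℝ} (hs : s ∈ Icc α β) (ht : t ∈ Icc α β) :
    f s - f t ≤ envelopeDiff f β - envelopeDiff f α := by
  have hαβ := hs.1.trans hs.2
  have hU₁ := le_supIic hf hs.2
  have hU₂ := le_supIci hf hs.1
  have hl := min_supIic_supIci_le hq ht.1 ht.2
  have hup := supIic_mono hf hαβ
  have hdn := supIci_anti hf hαβ
  unfold envelopeDiff
  rcases min_choice (supIic f α) (supIci f β) with h | h <;> rw [h] at hl <;> linarith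

lemma abs_sub_le_envelopeDiff_sub (hq : QuasiconcaveOn ℝ univ f) (hf : BddAbove (range f))
    {α β s t : ℝ} (hs : s ∈ Icc α β) (ht : t ∈ Icc α β) :
    |f s - f t| ≤ envelopeDiff f β - envelopeDiff f α :=
  abs_sub_le_iff.2 ⟨sub_le_envelopeDiff_sub hq hf hs ht, sub_le_envelopeDiff_sub hq hf ht hs⟩

end Envelope

section Telescoping

lemma sum_range_sub_shift_le {g : ℕ → ℝ} {A B : ℝ} (hg : ∀ n, g n ∈ Icc A B) (m N : ℕ) :
    ∑ n ∈ Finset.range N, (g (n + m) - g n) ≤ m * (B - A) := by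
  have hshift : ∑ n ∈ Finset.range m, g n + ∑ n ∈ Finset.range N, g (n + m)
      = ∑ n ∈ Finset.range N, g n + ∑ n ∈ Finset.range m, g (N + n) := by
    rw [← Finset.sum_range_add, add_comm N m, Finset.sum_range_add]
    simp only [add_comm m]
  have hB : ∑ n ∈ Finset.range m, g (N + n) ≤ m * B :=
    (Finset.sum_le_sum fun n _ => (hg _).2).trans_eq (by simp)
  have hA : m * A ≤ ∑ n ∈ Finset.range m, g n :=
    Eq.trans_le (by simp) (Finset.sum_le_sum fun n _ => (hg n).1)
  rw [Finset.sum_sub_distrib]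
  linarith

variable {φ : ℝ → ℝ} {A B : ℝ} {α β : ℕ → ℝ} {m : ℕ}

lemma sum_sub_le_of_le_shift (hφ : Monotone φ) (hb : ∀ t, φ t ∈ Icc A B)
    (h : ∀ n, β n ≤ α (n + m)) (N : ℕ) :
    ∑ n ∈ Finset.range N, (φ (β n) - φ (α n)) ≤ m * (B - A) :=
  (Finset.sum_le_sum fun n _ => sub_le_sub_right (hφ (h n)) _).trans
    (sum_range_sub_shift_le (fun n => hb (α n)) m N)

lemma sum_sub_le_of_shift_le (hφ : Monotone φ) (hb : ∀ t, φ t ∈ Icc A B)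
    (h : ∀ n, β (n + m) ≤ α n) (N : ℕ) :
    ∑ n ∈ Finset.range N, (φ (β n) - φ (α n)) ≤ m * (B - A) := by
  have hneg : ∀ n, -φ (β n) ∈ Icc (-B) (-A) := fun n =>
    ⟨neg_le_neg (hb _).2, neg_le_neg (hb _).1⟩
  calc ∑ n ∈ Finset.range N, (φ (β n) - φ (α n))
      ≤ ∑ n ∈ Finset.range N, (-φ (β (n + m)) - -φ (β n)) :=
        Finset.sum_le_sum fun n _ => by linarith [hφ (h n)]
    _ ≤ m * (-A - -B) := sum_range_sub_shift_le hneg m N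
    _ = m * (B - A) := by ring

end Telescoping

lemma isCompact_preimage_prodMk {X Y : Type*} [TopologicalSpace X] [TopologicalSpace Y]
    [T2Space X] [T2Space Y] {E : Set (X × Y)} (hE : IsCompact E) (x : X) :
    IsCompact (Prod.mk x ⁻¹' E) :=
  (Function.LeftInverse.isClosedEmbedding (f := Prod.snd) (fun _ => rfl) continuous_snd
    (by fun_prop)).isCompact_preimage hE

lemma toReal_volume_le_csSup_sub_csInf {S : Set ℝ} (hS : Bornology.IsBounded S) :
    (volume S).toReal ≤ sSup S - sInf S := by
  rw [← Real.diam_eq hS]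
  exact ENNReal.toReal_mono hS.ediam_ne_top (Real.volume_le_diam S)

lemma sub_le_toReal_volume {S : Set ℝ} (hS : volume S ≠ ⊤) {p q : ℝ} (h : Icc p q ⊆ S) :
    q - p ≤ (volume S).toReal := by
  rw [← ENNReal.ofReal_le_iff_le_toReal hS, ← Real.volume_Icc]
  exact measure_mono h

/-- One-dimensional Brunn–Minkowski. -/
lemma quasiconcaveOn_volume_preimage_prodMk {E : Set (ℝ × ℝ)} (hconv : Convex ℝ E)
    (hc : IsCompact E) : QuasiconcaveOn ℝ univ fun t => (volume (Prod.mk t ⁻¹' E)).toReal := by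
  refine quasiconcaveOn_iff_min_le.2 ⟨convex_univ, fun x _ y _ a b ha hb hab => ?_⟩
  set S : ℝ → Set ℝ := fun t => Prod.mk t ⁻¹' E
  have hS : ∀ t, IsCompact (S t) := isCompact_preimage_prodMk hc
  rcases (S x).eq_empty_or_nonempty with hx | hx
  · exact (min_le_left _ _).trans (by simp only [S] at hx; simp [hx])
  rcases (S y).eq_empty_or_nonempty with hy | hy
  · exact (min_le_right _ _).trans (by simp only [S] at hy; simp [hy])
  set z := a • x + b • y
  have hcomb : ∀ {u v}, u ∈ S x → v ∈ S y → a * u + b * v ∈ S z := fun hu hv =>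
    hconv hu hv ha hb hab
  have hSz : Convex ℝ (S z) := fun u hu v hv s r hs hr hsr => by
    have := hconv hu hv hs hr hsr
    rwa [Prod.smul_mk, Prod.smul_mk, Prod.mk_add_mk, ← add_smul, hsr, one_smul] at this
  have hIcc : Icc (a * sInf (S x) + b * sInf (S y)) (a * sSup (S x) + b * sSup (S y)) ⊆ S z :=
    hSz.ordConnected.out (hcomb ((hS x).sInf_mem hx) ((hS y).sInf_mem hy))
      (hcomb ((hS x).sSup_mem hx) ((hS y).sSup_mem hy))
  have hlx := toReal_volume_le_csSup_sub_csInf (hS x).isBounded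
  have hly := toReal_volume_le_csSup_sub_csInf (hS y).isBounded
  have hlz := sub_le_toReal_volume (hS z).measure_lt_top.ne hIcc
  set gx := (volume (S x)).toReal
  set gy := (volume (S y)).toReal
  calc min gx gy = a * min gx gy + b * min gx gy := by rw [← add_mul, hab, one_mul]
    _ ≤ a * gx + b * gy := add_le_add (mul_le_mul_of_nonneg_left (min_le_left _ _) ha)
        (mul_le_mul_of_nonneg_left (min_le_right _ _) hb)
    _ ≤ a * (sSup (S x) - sInf (S x)) + b * (sSup (S y) - sInf (S y)) :=
        add_le_add (mul_le_mul_of_nonneg_left hlx ha) (mul_le_mul_of_nonneg_left hly hb)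
    _ ≤ (volume (S z)).toReal := by linarith

def lineChart (θ : ℝ) : (ℝ × ℝ) →ₗ[ℝ] ℝ × ℝ where
  toFun p := (p.1 * -Real.sin θ + p.2 * Real.cos θ, p.1 * Real.cos θ + p.2 * Real.sin θ)
  map_add' p q := by ext <;> simp only [Prod.fst_add, Prod.snd_add] <;> ring
  map_smul' r p := by ext <;> simp only [Prod.smul_fst, Prod.smul_snd, smul_eq_mul,
    RingHom.id_apply] <;> ring

lemma lineChart_involutive (θ : ℝ) : Function.Involutive (lineChart θ) := fun p => by
  ext <;> simp only [lineChart, LinearMap.coe_mk, AddHom.coe_mk]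
  · linear_combination p.1 * Real.sin_sq_add_cos_sq θ
  · linear_combination p.2 * Real.sin_sq_add_cos_sq θ

lemma lineLen_eq (θ t : ℝ) (K : Set (ℝ × ℝ)) :
    lineLen θ t K = volume (Prod.mk t ⁻¹' (lineChart θ ⁻¹' K)) := rfl

lemma proj_lineChart (θ t u : ℝ) : proj θ (lineChart θ (t, u)) = t := by
  simp only [proj, lineChart, LinearMap.coe_mk, AddHom.coe_mk]
  linear_combination t * Real.sin_sq_add_cos_sq θ

lemma lineSet_inter_nonempty_of_lineLen_ne_zero {θ t : ℝ} {K : Set (ℝ × ℝ)}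
    (h : lineLen θ t K ≠ 0) : (lineSet θ t ∩ K).Nonempty :=
  let ⟨u, hu⟩ := nonempty_of_measure_ne_zero h
  ⟨lineChart θ (t, u), proj_lineChart θ t u, hu⟩

lemma volume_preimage_lineChart (θ : ℝ) (K : Set (ℝ × ℝ)) :
    volume (lineChart θ ⁻¹' K) = volume K := by
  have hdet : (lineChart θ).det * (lineChart θ).det = 1 := by
    have hcomp : (lineChart θ).comp (lineChart θ) = LinearMap.id :=
      LinearMap.ext (lineChart_involutive θ)
    rw [← LinearMap.det_comp, hcomp, LinearMap.det_id]
  rw [Measure.addHaar_preimage_linearMap volume (left_ne_zero_of_mul_eq_one hdet)]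
  rcases mul_self_eq_one_iff.1 hdet with h | h <;> simp [h]

lemma measurable_lineLen (θ : ℝ) {K : Set (ℝ × ℝ)} (hK : MeasurableSet K) :
    Measurable fun t => lineLen θ t K :=
  measurable_measure_prodMk_left
    ((lineChart θ).continuous_of_finiteDimensional.measurable hK)

lemma lintegral_lineLen (θ : ℝ) {K : Set (ℝ × ℝ)} (hK : MeasurableSet K) :
    ∫⁻ t, lineLen θ t K = volume K := by
  simp only [lineLen_eq]
  rw [← Measure.prod_apply ((lineChart θ).continuous_of_finiteDimensional.measurable hK),
    ← Measure.volume_eq_prod, volume_preimage_lineChart]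

lemma integrable_lineLen_toReal (θ : ℝ) {K : Set (ℝ × ℝ)} (hK : MeasurableSet K)
    (hKf : volume K ≠ ⊤) : Integrable fun t => (lineLen θ t K).toReal :=
  integrable_toReal_of_lintegral_ne_top (measurable_lineLen θ hK).aemeasurable
    (by rwa [lintegral_lineLen θ hK])

lemma integral_lineLen_toReal (θ : ℝ) {K : Set (ℝ × ℝ)} (hK : MeasurableSet K)
    (hKf : volume K ≠ ⊤) : ∫ t, (lineLen θ t K).toReal = (volume K).toReal := by
  rw [integral_toReal (measurable_lineLen θ hK).aemeasurable
    (ae_lt_top (measurable_lineLen θ hK) (by rwa [lintegral_lineLen θ hK])),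
    lintegral_lineLen θ hK]

lemma quasiconcaveOn_lineLen (θ : ℝ) {K : Set (ℝ × ℝ)} (hconv : Convex ℝ K)
    (hc : IsCompact K) : QuasiconcaveOn ℝ univ fun t => (lineLen θ t K).toReal := by
  refine quasiconcaveOn_volume_preimage_prodMk (hconv.linear_preimage (lineChart θ)) ?_
  rw [← (lineChart_involutive θ).image_eq_preimage_symm]
  exact hc.image (lineChart θ).continuous_of_finiteDimensional

lemma lineLen_toReal_le {K : Set (ℝ × ℝ)} {R : ℝ} (hK : K ⊆ Metric.closedBall 0 R)
    (hR : 0 ≤ R) (θ t : ℝ) : (lineLen θ t K).toReal ≤ 4 * R := by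
  have hsub : Prod.mk t ⁻¹' (lineChart θ ⁻¹' K) ⊆ Icc (-(2 * R)) (2 * R) := by
    intro u hu
    set p := lineChart θ (t, u)
    have hp : ‖p‖ ≤ R := mem_closedBall_zero_iff.1 (hK hu)
    have hu : u = p.1 * Real.cos θ + p.2 * Real.sin θ :=
      (congrArg Prod.snd (lineChart_involutive θ (t, u))).symm
    have h₁ : |p.1 * Real.cos θ| ≤ R := by
      rw [abs_mul]
      exact (mul_le_of_le_one_right (abs_nonneg _) (Real.abs_cos_le_one θ)).trans
        ((norm_fst_le p).trans hp)
    have h₂ : |p.2 * Real.sin θ| ≤ R := by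
      rw [abs_mul]
      exact (mul_le_of_le_one_right (abs_nonneg _) (Real.abs_sin_le_one θ)).trans
        ((norm_snd_le p).trans hp)
    exact abs_le.1 (hu ▸ (abs_add_le _ _).trans (by linarith))
  refine ENNReal.toReal_le_of_le_ofReal (by positivity) ((measure_mono hsub).trans ?_)
  rw [Real.volume_Icc]
  exact le_of_eq (congrArg ENNReal.ofReal (by ring))

lemma abs_sub_integral_mul_le {Ω : Type*} [MeasurableSpace Ω] {μ : Measure Ω} {w f : Ω → ℝ}
    {c D : ℝ} (hw0 : 0 ≤ w) (hwi : Integrable w μ) (hw1 : ∫ x, w x ∂μ = 1)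
    (hf : AEStronglyMeasurable f μ) (hD : ∀ x, w x ≠ 0 → |f x - c| ≤ D) :
    |c - ∫ x, w x * f x ∂μ| ≤ D := by
  have hbound : ∀ x, ‖w x * (f x - c)‖ ≤ D * w x := fun x => by
    by_cases hx : w x = 0
    · simp [hx]
    · rw [norm_mul, Real.norm_of_nonneg (hw0 x), Real.norm_eq_abs, mul_comm]
      exact mul_le_mul_of_nonneg_right (hD x hx) (hw0 x)
  have hint : Integrable (fun x => w x * (f x - c)) μ :=
    (hwi.const_mul D).mono' (hwi.aestronglyMeasurable.mul (hf.sub aestronglyMeasurable_const))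
      (ae_of_all _ hbound)
  have hsplit : ∫ x, w x * f x ∂μ = ∫ x, w x * (f x - c) ∂μ + c := by
    simp_rw [show ∀ x, w x * f x = w x * (f x - c) + c * w x from fun x => by ring]
    rw [integral_add hint (hwi.const_mul c), integral_const_mul, hw1, mul_one]
  calc |c - ∫ x, w x * f x ∂μ| = ‖∫ x, w x * (f x - c) ∂μ‖ := by
        rw [hsplit, Real.norm_eq_abs, ← abs_neg]; ring_nf
    _ ≤ ∫ x, D * w x ∂μ := norm_integral_le_of_norm_le (hwi.const_mul D) (ae_of_all _ hbound)
    _ = D := by rw [integral_const_mul, hw1, mul_one]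

lemma isCompact_gridSq (L k a b : ℕ) : IsCompact (gridSq L k a b) :=
  isCompact_Icc.prod isCompact_Icc

lemma convex_gridSq (L k a b : ℕ) : Convex ℝ (gridSq L k a b) :=
  (convex_Icc _ _).prod (convex_Icc _ _)

lemma toReal_volume_gridSq (L k a b : ℕ) :
    (volume (gridSq L k a b)).toReal = ((L : ℝ) ^ (2 * k))⁻¹ := by
  have hside : ∀ n : ℕ, ((n : ℝ) + 1) / (L : ℝ) ^ k - (n : ℝ) / (L : ℝ) ^ k = ((L : ℝ) ^ k)⁻¹ :=
    fun n => by ring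
  rw [gridSq, Measure.volume_eq_prod, Measure.prod_prod, Real.volume_Icc, Real.volume_Icc,
    hside, hside, ENNReal.toReal_mul, ENNReal.toReal_ofReal (by positivity), ← mul_inv,
    ← pow_add, two_mul]

lemma gridSq_subset_closedBall {L k a b : ℕ} (ha : a < L ^ k) (hb : b < L ^ k) :
    gridSq L k a b ⊆ Metric.closedBall 0 1 := by
  have hX : (0 : ℝ) < (L : ℝ) ^ k := by exact_mod_cast Nat.zero_lt_of_lt ha
  have hcoord : ∀ {n : ℕ} {x : ℝ}, n < L ^ k →
      x ∈ Icc ((n : ℝ) / (L : ℝ) ^ k) (((n : ℝ) + 1) / (L : ℝ) ^ k) → ‖x‖ ≤ 1 := by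
    intro n x hn hx
    have hn' : (n : ℝ) + 1 ≤ (L : ℝ) ^ k := by exact_mod_cast hn
    rw [Real.norm_eq_abs, abs_le]
    exact ⟨by linarith [hx.1, div_nonneg n.cast_nonneg hX.le],
      hx.2.trans ((div_le_one hX).2 hn')⟩
  rintro p ⟨hp₁, hp₂⟩
  exact mem_closedBall_zero_iff.2 (max_le (hcoord ha hp₁) (hcoord hb hp₂))

def gridCenter (L k a b : ℕ) : ℝ × ℝ :=
  (((a : ℝ) + 1 / 2) / (L : ℝ) ^ k, ((b : ℝ) + 1 / 2) / (L : ℝ) ^ k)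

def projRadius (L k : ℕ) (θ : ℝ) : ℝ := (|Real.sin θ| + |Real.cos θ|) / (2 * (L : ℝ) ^ k)

lemma projRadius_nonneg (L k : ℕ) (θ : ℝ) : 0 ≤ projRadius L k θ := by
  unfold projRadius; positivity

lemma projRadius_add_self_le {L k : ℕ} {θ x : ℝ} (h : |Real.sin θ| + |Real.cos θ| ≤ x) :
    projRadius L k θ + projRadius L k θ ≤ x / (L : ℝ) ^ k := by
  calc _ = (|Real.sin θ| + |Real.cos θ|) / (L : ℝ) ^ k := by rw [projRadius]; ring
    _ ≤ x / (L : ℝ) ^ k := div_le_div_of_nonneg_right h (by positivity)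

lemma abs_proj_sub_proj_gridCenter_le {L k a b : ℕ} {p : ℝ × ℝ} (hp : p ∈ gridSq L k a b)
    (θ : ℝ) : |proj θ p - proj θ (gridCenter L k a b)| ≤ projRadius L k θ := by
  set X := (L : ℝ) ^ k
  have hcoord : ∀ {n : ℕ} {x : ℝ}, x ∈ Icc ((n : ℝ) / X) (((n : ℝ) + 1) / X) →
      |x - ((n : ℝ) + 1 / 2) / X| ≤ 1 / (2 * X) := by
    intro n x hx
    have e₁ : (n : ℝ) / X = ((n : ℝ) + 1 / 2) / X - 1 / (2 * X) := by ring
    have e₂ : ((n : ℝ) + 1) / X = ((n : ℝ) + 1 / 2) / X + 1 / (2 * X) := by ring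
    rw [abs_le]
    constructor <;> linarith [hx.1, hx.2]
  obtain ⟨hx, hy⟩ := hp
  calc |proj θ p - proj θ (gridCenter L k a b)|
      = |-(p.1 - ((a : ℝ) + 1 / 2) / X) * Real.sin θ
          + (p.2 - ((b : ℝ) + 1 / 2) / X) * Real.cos θ| := by
        congr 1; simp only [proj, gridCenter]; ring
    _ ≤ |p.1 - ((a : ℝ) + 1 / 2) / X| * |Real.sin θ|
          + |p.2 - ((b : ℝ) + 1 / 2) / X| * |Real.cos θ| :=
        (abs_add_le _ _).trans_eq (by rw [abs_mul, abs_mul, abs_neg])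
    _ ≤ 1 / (2 * X) * |Real.sin θ| + 1 / (2 * X) * |Real.cos θ| :=
        add_le_add (mul_le_mul_of_nonneg_right (hcoord hx) (abs_nonneg _))
          (mul_le_mul_of_nonneg_right (hcoord hy) (abs_nonneg _))
    _ = projRadius L k θ := by rw [projRadius]; ring

lemma proj_gridCenter_add_left (θ : ℝ) (L k a b m : ℕ) :
    proj θ (gridCenter L k (a + m) b)
      = proj θ (gridCenter L k a b) - m * Real.sin θ / (L : ℝ) ^ k := by
  simp only [proj, gridCenter]; push_cast; ring

lemma proj_gridCenter_add_right (θ : ℝ) (L k a b m : ℕ) :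
    proj θ (gridCenter L k a (b + m))
      = proj θ (gridCenter L k a b) + m * Real.cos θ / (L : ℝ) ^ k := by
  simp only [proj, gridCenter]; push_cast; ring

lemma sum_sum_gridCenter_le {φ : ℝ → ℝ} {A B : ℝ} (hφ : Monotone φ) (hb : ∀ t, φ t ∈ Icc A B)
    {θ : ℝ} (hθ : 0 ≤ Real.sin θ) (L k N : ℕ) :
    ∑ a ∈ Finset.range N, ∑ b ∈ Finset.range N,
      (φ (proj θ (gridCenter L k a b) + projRadius L k θ)
        - φ (proj θ (gridCenter L k a b) - projRadius L k θ))
      ≤ N * (2 * (B - A)) := by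
  set c := fun a b => proj θ (gridCenter L k a b)
  set ρ := projRadius L k θ
  have hrows : ∀ g : ℕ → ℕ → ℝ, (∀ i, ∑ j ∈ Finset.range N, g i j ≤ 2 * (B - A)) →
      ∑ i ∈ Finset.range N, ∑ j ∈ Finset.range N, g i j ≤ N * (2 * (B - A)) := fun g hg =>
    (Finset.sum_le_sum fun i _ => hg i).trans_eq (by simp)
  -- Two steps along a row (if `|cos θ| ≤ sin θ`) or a column (otherwise) move the projection
  -- interval of a square by at least its length, so the increments of `φ` telescope.
  rcases le_total |Real.cos θ| (Real.sin θ) with h | h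
  · have hρ := projRadius_add_self_le (L := L) (k := k) (x := 2 * Real.sin θ)
      (by rw [abs_of_nonneg hθ]; linarith)
    rw [Finset.sum_comm]
    refine hrows _ fun b => ?_
    exact_mod_cast sum_sub_le_of_shift_le (m := 2) (α := fun a => c a b - ρ)
      (β := fun a => c a b + ρ) hφ hb
      (fun a => by simp only [c, proj_gridCenter_add_left]; push_cast; linarith) N
  · have hρ := projRadius_add_self_le (L := L) (k := k) (x := 2 * |Real.cos θ|)
      (by rw [abs_of_nonneg hθ]; linarith)
    refine hrows _ fun a => ?_
    rcases le_total 0 (Real.cos θ) with hc | hc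
    · rw [abs_of_nonneg hc] at hρ
      exact_mod_cast sum_sub_le_of_le_shift (m := 2) (α := fun b => c a b - ρ)
        (β := fun b => c a b + ρ) hφ hb
        (fun b => by simp only [c, proj_gridCenter_add_right]; push_cast; linarith) N
    · rw [abs_of_nonpos hc, mul_neg, neg_div] at hρ
      exact_mod_cast sum_sub_le_of_shift_le (m := 2) (α := fun b => c a b - ρ)
        (β := fun b => c a b + ρ) hφ hb
        (fun b => by simp only [c, proj_gridCenter_add_right]; push_cast; linarith) N

lemma lineLen_gridSq_toReal_mem_Icc {L k a b : ℕ} (ha : a < L ^ k) (hb : b < L ^ k)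
    (θ t : ℝ) : (lineLen θ t (gridSq L k a b)).toReal ∈ Icc 0 4 :=
  ⟨ENNReal.toReal_nonneg, by
    simpa using lineLen_toReal_le (gridSq_subset_closedBall ha hb) zero_le_one θ t⟩

lemma errVal_le {L : ℕ} (k : ℕ) (θ : ℝ) (a b : ℕ) {aκ bκ : ℕ} (haκ : aκ < L) (hbκ : bκ < L) :
    ErrVal L k θ a b aκ bκ ≤
      envelopeDiff (fun t => (lineLen θ t (gridSq L 1 aκ bκ)).toReal)
          (proj θ (gridCenter L k a b) + projRadius L k θ)
        - envelopeDiff (fun t => (lineLen θ t (gridSq L 1 aκ bκ)).toReal)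
          (proj θ (gridCenter L k a b) - projRadius L k θ) := by
  set f := fun t => (lineLen θ t (gridSq L 1 aκ bκ)).toReal
  set Q := gridSq L k a b
  set I := Icc (proj θ (gridCenter L k a b) - projRadius L k θ)
    (proj θ (gridCenter L k a b) + projRadius L k θ)
  have hf : ∀ t, f t ∈ Icc 0 4 :=
    lineLen_gridSq_toReal_mem_Icc (by rwa [pow_one]) (by rwa [pow_one]) θ
  have hfb : BddAbove (range f) := ⟨4, by rintro _ ⟨t, rfl⟩; exact (hf t).2⟩
  have hq := quasiconcaveOn_lineLen θ (convex_gridSq L 1 aκ bκ) (isCompact_gridSq L 1 aκ bκ)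
  have hI : ∀ t, (lineSet θ t ∩ Q).Nonempty → t ∈ I := by
    rintro t ⟨p, hpt, hpQ⟩
    have := abs_le.1 (abs_proj_sub_proj_gridCenter_le hpQ θ)
    rw [show proj θ p = t from hpt] at this
    exact ⟨by linarith, by linarith⟩
  set w := fun s => (L : ℝ) ^ (2 * k) * (lineLen θ s Q).toReal
  have hQm : MeasurableSet Q := (isCompact_gridSq L k a b).isClosed.measurableSet
  have hQf : volume Q ≠ ⊤ := (isCompact_gridSq L k a b).measure_lt_top.ne
  have hw1 : ∫ s, w s = 1 := by
    rw [integral_const_mul, integral_lineLen_toReal θ hQm hQf, toReal_volume_gridSq]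
    exact mul_inv_cancel₀ (pow_ne_zero _ (Nat.cast_ne_zero.2 (Nat.ne_zero_of_lt haκ)))
  have hwI : ∀ s, w s ≠ 0 → s ∈ I := fun s hs =>
    hI s (lineSet_inter_nonempty_of_lineLen_ne_zero fun h => hs (by simp [w, h]))
  have hV : Vval L k θ a b aκ bκ = ∫ s, w s * f s := by
    rw [Vval, ← integral_const_mul]
    simp only [w, f, Q, mul_assoc]
  refine Real.sSup_le ?_
    (sub_nonneg.2 (envelopeDiff_mono hfb (by linarith [projRadius_nonneg L k θ])))
  rintro _ ⟨t, ht, rfl⟩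
  rw [hV]
  exact abs_sub_integral_mul_le (fun s => by positivity)
    ((integrable_lineLen_toReal θ hQm hQf).const_mul _) hw1
    ((measurable_lineLen θ (isCompact_gridSq L 1 aκ bκ).isClosed.measurableSet).ennreal_toReal
      |>.aestronglyMeasurable)
    fun s hs => abs_sub_le_envelopeDiff_sub hq hfb (hwI s hs) (hI t ht)

end

theorem stmt10_general (L : ℕ) :
    ∃ C > (0 : ℝ), ∀ θ ∈ Set.Icc (0 : ℝ) Real.pi, ∀ k : ℕ, 1 ≤ k →
      ∀ aκ bκ : ℕ, aκ < L → bκ < L →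
      ((L : ℝ) ^ (2 * k))⁻¹ *
          ∑ a ∈ Finset.range (L ^ k), ∑ b ∈ Finset.range (L ^ k), ErrVal L k θ a b aκ bκ
        ≤ C * ((L : ℝ) ^ k)⁻¹ := by
  refine ⟨16, by norm_num, fun θ hθ k _ aκ bκ haκ hbκ => ?_⟩
  set f := fun t => (lineLen θ t (gridSq L 1 aκ bκ)).toReal
  have hf : ∀ t, f t ∈ Icc 0 4 :=
    lineLen_gridSq_toReal_mem_Icc (by rwa [pow_one]) (by rwa [pow_one]) θ
  have hfb : BddAbove (range f) := ⟨4, by rintro _ ⟨t, rfl⟩; exact (hf t).2⟩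
  have hL : (L : ℝ) ≠ 0 := Nat.cast_ne_zero.2 (Nat.ne_zero_of_lt haκ)
  have hsum : ∑ a ∈ Finset.range (L ^ k), ∑ b ∈ Finset.range (L ^ k), ErrVal L k θ a b aκ bκ
      ≤ (L : ℝ) ^ k * 16 :=
    calc _ ≤ _ := Finset.sum_le_sum fun a _ => Finset.sum_le_sum fun b _ =>
          errVal_le k θ a b haκ hbκ
      _ ≤ ((L ^ k : ℕ) : ℝ) * (2 * (4 - -4)) :=
          sum_sum_gridCenter_le (envelopeDiff_mono hfb) (envelopeDiff_mem_Icc hf)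
            (Real.sin_nonneg_of_nonneg_of_le_pi hθ.1 hθ.2) L k (L ^ k)
      _ = (L : ℝ) ^ k * 16 := by push_cast; ring
  calc ((L : ℝ) ^ (2 * k))⁻¹ * ∑ a ∈ Finset.range (L ^ k), ∑ b ∈ Finset.range (L ^ k),
        ErrVal L k θ a b aκ bκ
      ≤ ((L : ℝ) ^ (2 * k))⁻¹ * ((L : ℝ) ^ k * 16) := by gcongr
    _ = 16 * ((L : ℝ) ^ k)⁻¹ := by rw [two_mul, pow_add]; field_simp

/-- The average of `Err(θ,η,κ)` over all `η ∈ D_k` is at most `C·L^{-k}`, with `C` depending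
only on `L`. -/
theorem stmt10 (L : ℕ) (hL : 2 ≤ L) :
    ∃ C > (0 : ℝ), ∀ θ ∈ Set.Icc (0 : ℝ) Real.pi, ∀ k : ℕ, 1 ≤ k →
      ∀ aκ bκ : ℕ, aκ < L → bκ < L →
      ((L : ℝ) ^ (2 * k))⁻¹ *
          ∑ a ∈ Finset.range (L ^ k), ∑ b ∈ Finset.range (L ^ k), ErrVal L k θ a b aκ bκ
        ≤ C * ((L : ℝ) ^ k)⁻¹ :=
  stmt10_general L
end

section
/- For θ ∈ (0, π/2) and a square Q of side h in ℝ² with sides parallel to the axes, the function g(t) = |ℓ(θ,t) ∩ Q| (length of intersection of the line ℓ(θ,t) = proj_θ^{-1}(t) with Q) is Lipschitz with constant 1/(sin θ · cos θ). -/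
open MeasureTheory

/-
The chord of the line `ℓ(θ,t)` through the rectangle `[x, x'] × [y, y']` is, in the arclength
parameter `u`, the interval from `max (entry through a vertical side) (entry through a horizontal
side)` to the corresponding `min` of the exits. All four endpoints are affine in `t`. Writing
`min b b' - max a a'` as the minimum of the four differences `b - a`, `b' - a'`, `b - a'`, `b' - a`,
the first two are the constants `(x' - x)/cos θ` and `(y' - y)/sin θ`, while the two mixed ones have
slope `± (sin θ / cos θ + cos θ / sin θ) = ± 1/(sin θ cos θ)`. Minima and `max · 0` preserve the
Lipschitz constant.
-/

open Real Set NNReal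

lemma min_sub_max {α : Type*} [AddCommGroup α] [LinearOrder α] [IsOrderedAddMonoid α]
    (a a' b b' : α) :
    min b b' - max a a' = min (min (b - a) (b - a')) (min (b' - a) (b' - a')) := by
  rw [← min_sub_sub_right, ← min_sub_sub_left, ← min_sub_sub_left]

lemma LipschitzWith.max_min_sub_max_zero {α : Type*} [PseudoEMetricSpace α] {K : ℝ≥0}
    {a a' b b' : α → ℝ} (hba : LipschitzWith K fun t => b t - a t)
    (hba' : LipschitzWith K fun t => b t - a' t) (hb'a : LipschitzWith K fun t => b' t - a t)
    (hb'a' : LipschitzWith K fun t => b' t - a' t) :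
    LipschitzWith K fun t => max (min (b t) (b' t) - max (a t) (a' t)) 0 := by
  simp_rw [min_sub_max]
  simpa using ((hba.min hba').min (hb'a.min hb'a')).max_const 0

lemma lipschitzWith_of_sub_eq_mul {f : ℝ → ℝ} {k : ℝ} {K : ℝ≥0} (hk : |k| ≤ K)
    (hf : ∀ t t', f t - f t' = k * (t - t')) : LipschitzWith K f :=
  LipschitzWith.of_dist_le_mul fun t t' => by
    rw [Real.dist_eq, Real.dist_eq, hf, abs_mul]
    exact mul_le_mul_of_nonneg_right hk (abs_nonneg _)

lemma lineLen_Icc_prod_Icc {θ : ℝ} (hs : 0 < sin θ) (hc : 0 < cos θ) (t x x' y y' : ℝ) :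
    (lineLen θ t (Icc x x' ×ˢ Icc y y')).toReal =
      max (min ((x' + t * sin θ) / cos θ) ((y' - t * cos θ) / sin θ)
        - max ((x + t * sin θ) / cos θ) ((y - t * cos θ) / sin θ)) 0 := by
  have hchord : {u : ℝ | (t * (-sin θ) + u * cos θ, t * cos θ + u * sin θ) ∈ Icc x x' ×ˢ Icc y y'}
      = Icc (max ((x + t * sin θ) / cos θ) ((y - t * cos θ) / sin θ))
          (min ((x' + t * sin θ) / cos θ) ((y' - t * cos θ) / sin θ)) := by
    ext u
    simp only [mem_ofPred_eq, mem_prod, mem_Icc, max_le_iff, le_min_iff,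
      div_le_iff₀ hc, div_le_iff₀ hs, le_div_iff₀ hc, le_div_iff₀ hs]
    constructor <;> rintro ⟨⟨h₁, h₂⟩, h₃, h₄⟩ <;>
      exact ⟨⟨by linarith, by linarith⟩, by linarith, by linarith⟩
  rw [lineLen, hchord, Real.volume_Icc, ENNReal.toReal_ofReal']

theorem lipschitzWith_lineLen_Icc_prod_Icc {θ : ℝ} (hθ : θ ∈ Ioo 0 (π / 2)) (x x' y y' : ℝ) :
    LipschitzWith (toNNReal (1 / (sin θ * cos θ)))
      (fun t => (lineLen θ t (Icc x x' ×ˢ Icc y y')).toReal) := by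
  obtain ⟨hθ₀, hθ₁⟩ := hθ
  have hs : 0 < sin θ := sin_pos_of_pos_of_lt_pi hθ₀ (by linarith [Real.pi_pos])
  have hc : 0 < cos θ := cos_pos_of_mem_Ioo ⟨by linarith, hθ₁⟩
  have hK : |1 / (sin θ * cos θ)| ≤ toNNReal (1 / (sin θ * cos θ)) := by
    rw [coe_toNNReal _ (by positivity), abs_of_pos (by positivity)]
  have hK₀ : |(0 : ℝ)| ≤ toNNReal (1 / (sin θ * cos θ)) := by simp
  have hsc := sin_sq_add_cos_sq θ
  simp_rw [lineLen_Icc_prod_Icc hs hc]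
  refine LipschitzWith.max_min_sub_max_zero ?_ ?_ ?_ ?_
  · exact lipschitzWith_of_sub_eq_mul hK₀ fun t t' => by field_simp; ring
  · exact lipschitzWith_of_sub_eq_mul hK fun t t' => by
      field_simp; linear_combination (t - t') * hsc
  · exact lipschitzWith_of_sub_eq_mul (k := -(1 / (sin θ * cos θ))) (by rwa [abs_neg])
      fun t t' => by field_simp; linear_combination (t' - t) * hsc
  · exact lipschitzWith_of_sub_eq_mul hK₀ fun t t' => by field_simp; ring

theorem stmt11_general (θ : ℝ) (hθ : θ ∈ Set.Ioo 0 (Real.pi / 2)) (x y h : ℝ) :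
    LipschitzWith (Real.toNNReal (1 / (Real.sin θ * Real.cos θ)))
      (fun t => (lineLen θ t (Set.Icc x (x + h) ×ˢ Set.Icc y (y + h))).toReal) :=
  lipschitzWith_lineLen_Icc_prod_Icc hθ x (x + h) y (y + h)

/-- For `θ ∈ (0, π/2)` and an axis-parallel square `Q` of side `h`, the chord-length function
`t ↦ |ℓ(θ,t) ∩ Q|` is Lipschitz with constant `1/(sin θ · cos θ)`. -/
theorem stmt11 (θ : ℝ) (hθ : θ ∈ Set.Ioo 0 (Real.pi / 2)) (x y h : ℝ) (hh : 0 < h) :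
    LipschitzWith (Real.toNNReal (1 / (Real.sin θ * Real.cos θ)))
      (fun t => (lineLen θ t (Set.Icc x (x + h) ×ˢ Set.Icc y (y + h))).toReal) :=
  stmt11_general θ hθ x y h
end
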